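/- arXiv:1605.01769 — 3 statements merged into one kernel-verified Lean document; each statement's English description precedes it below -/
import Mathlib

section
/- In a finite directed deadlock-free graph G (every node has a successor), a node r0 satisfies A[φ1 U φ2] if and only if the eventuality graph G(r0, φ2) is acyclic and every interior node of it satisfies φ1. -/
/-!
`A[φ1 U φ2]` propagates along every edge leaving a node where `φ2` fails (prepend the edge
to a path), so it holds at every node of `G(r0, φ2)`. Hence an interior node satisfies `φ1`
(follow any infinite path out of it), and a cycle would give an infinite path never meeting
`φ2`. Conversely, a path from `r0` that avoids `φ2` stays inside the finite eventuality
graph, so it revisits a node and closes a cycle; thus every path meets `φ2`, and each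
position before the first such one is an interior node.
-/

open Relation

section Sequences

variable {α : Type*} {r : α → α → Prop}

theorem exists_seq_of_forall_exists_rel {S : Set α} (h : ∀ a ∈ S, ∃ b ∈ S, r a b)
    {a : α} (ha : a ∈ S) : ∃ f : ℕ → α, f 0 = a ∧ ∀ n, r (f n) (f (n + 1)) := by
  choose g hgS hgr using h
  let q : ℕ → S := fun n => Nat.rec ⟨a, ha⟩ (fun _ b => ⟨g b b.2, hgS b b.2⟩) n
  exact ⟨fun n => (q n).1, rfl, fun n => hgr _ (q n).2⟩

theorem exists_seq_of_transGen_self {a : α} (h : TransGen r a a) :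
    ∃ f : ℕ → α, f 0 = a ∧ ∀ n, r (f n) (f (n + 1)) := by
  refine exists_seq_of_forall_exists_rel (S := {b | TransGen r b a}) ?_ h
  intro b hb
  obtain ⟨c, hbc, hca⟩ := TransGen.head'_iff.mp hb
  rcases hca.cases_head with rfl | hca
  · exact ⟨c, h, hbc⟩
  · exact ⟨c, TransGen.head'_iff.mpr hca, hbc⟩

theorem exists_transGen_self_of_forall_rel_succ [Finite α] {f : ℕ → α}
    (h : ∀ n, r (f n) (f (n + 1))) : ∃ n, TransGen r (f n) (f n) := by
  obtain ⟨i, j, hne, hij⟩ := Finite.exists_ne_map_eq_of_infinite f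
  have hchain := Nat.rel_of_forall_rel_succ_of_lt (TransGen r) (fun n => TransGen.single (h n))
  rcases hne.lt_or_gt with hlt | hlt
  · exact ⟨i, by simpa only [← hij] using hchain hlt⟩
  · exact ⟨j, by simpa only [hij] using hchain hlt⟩

end Sequences

section AllUntil

variable {V : Type*} (E : V → V → Prop) (φ1 φ2 : V → Prop)

def EventualityEdge (a b : V) : Prop := E a b ∧ ¬ φ2 a

def eventualityNodes (r0 : V) : Set V := {x | ReflTransGen (EventualityEdge E φ2) r0 x}

def AllUntil (a : V) : Prop :=
  ∀ p : ℕ → V, p 0 = a → (∀ i, E (p i) (p (i + 1))) → ∃ n, φ2 (p n) ∧ ∀ i < n, φ1 (p i)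

variable {E φ1 φ2}

theorem AllUntil.of_eventualityEdge {a b : V} (ha : AllUntil E φ1 φ2 a)
    (hab : EventualityEdge E φ2 a b) : AllUntil E φ1 φ2 b := by
  intro p hp0 hp
  obtain ⟨_ | n, hn, hlt⟩ := ha (fun | 0 => a | i + 1 => p i) rfl
    (fun | 0 => show E a (p 0) from hp0 ▸ hab.1 | i + 1 => hp i)
  · exact absurd hn hab.2
  · exact ⟨n, hn, fun i hi => hlt (i + 1) (Nat.succ_lt_succ hi)⟩

theorem AllUntil.of_reflTransGen {a b : V} (ha : AllUntil E φ1 φ2 a)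
    (hab : ReflTransGen (EventualityEdge E φ2) a b) : AllUntil E φ1 φ2 b := by
  induction hab with
  | refl => exact ha
  | tail _ hbc ih => exact ih.of_eventualityEdge hbc

theorem AllUntil.left_of_not_right (hdf : ∀ x, ∃ y, E x y) {a : V}
    (ha : AllUntil E φ1 φ2 a) (hna : ¬ φ2 a) : φ1 a := by
  obtain ⟨p, hp0, hp⟩ :=
    exists_seq_of_forall_exists_rel (S := Set.univ)
      (fun x _ => (hdf x).imp fun _ h => ⟨trivial, h⟩) (Set.mem_univ a)
  obtain ⟨_ | n, hn, hlt⟩ := ha p hp0 hp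
  · exact absurd (hp0 ▸ hn) hna
  · exact hp0 ▸ hlt 0 n.succ_pos

theorem not_allUntil_of_transGen_self {a : V}
    (h : TransGen (EventualityEdge E φ2) a a) : ¬ AllUntil E φ1 φ2 a := by
  intro ha
  obtain ⟨p, hp0, hp⟩ := exists_seq_of_transGen_self h
  obtain ⟨n, hn, -⟩ := ha p hp0 fun i => (hp i).1
  exact (hp n).2 hn

theorem allUntil_of_acyclic [Finite V] {r0 : V}
    (hacyc : ∀ x ∈ eventualityNodes E φ2 r0, ¬ TransGen (fun a b => EventualityEdge E φ2 a b ∧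
      a ∈ eventualityNodes E φ2 r0 ∧ b ∈ eventualityNodes E φ2 r0) x x)
    (hint : ∀ x ∈ eventualityNodes E φ2 r0,
      (∃ y, EventualityEdge E φ2 x y ∧ y ∈ eventualityNodes E φ2 r0) → φ1 x) :
    AllUntil E φ1 φ2 r0 := by
  classical
  intro p hp0 hp
  have hmem : ∀ n, (∀ i < n, ¬ φ2 (p i)) → p n ∈ eventualityNodes E φ2 r0 := by
    intro n
    induction n with
    | zero => exact fun _ => hp0 ▸ ReflTransGen.refl
    | succ n ih =>
      exact fun h => (ih fun i hi => h i (by omega)).tail ⟨hp n, h n n.lt_succ_self⟩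
  have hex : ∃ n, φ2 (p n) := by
    by_contra! h
    have hpath : ∀ n, p n ∈ eventualityNodes E φ2 r0 := fun n => hmem n fun i _ => h i
    refine (exists_transGen_self_of_forall_rel_succ ?_).elim fun n hn => hacyc (p n) (hpath n) hn
    exact fun n => ⟨⟨hp n, h n⟩, hpath n, hpath (n + 1)⟩
  refine ⟨Nat.find hex, Nat.find_spec hex, fun i hi => hint _ ?_ ⟨p (i + 1), ?_, ?_⟩⟩
  · exact hmem i fun j hj => Nat.find_min hex (hj.trans hi)
  · exact ⟨hp i, Nat.find_min hex hi⟩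
  · exact hmem (i + 1) fun j hj => Nat.find_min hex (by omega)

end AllUntil

/-- In a finite deadlock-free directed graph, `r0 ⊨ A[φ1 U φ2]` (along every infinite
path from `r0` there is a position where `φ2` holds with `φ1` at all earlier positions)
iff the eventuality graph `G(r0, φ2)` is acyclic and every interior node of it
satisfies `φ1`. -/
theorem stmt14 {V : Type*} [Fintype V] (E : V → V → Prop) (φ1 φ2 : V → Prop)
    (hdf : ∀ x : V, ∃ y : V, E x y) (r0 : V) :
    let Ee : V → V → Prop := fun a b => E a b ∧ ¬ φ2 a
    let nodes : Set V := {x | Relation.ReflTransGen Ee r0 x}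
    ((∀ p : ℕ → V, p 0 = r0 → (∀ i : ℕ, E (p i) (p (i + 1))) →
        ∃ n : ℕ, φ2 (p n) ∧ ∀ i < n, φ1 (p i)) ↔
      ((∀ x ∈ nodes, ¬ Relation.TransGen
          (fun a b => Ee a b ∧ a ∈ nodes ∧ b ∈ nodes) x x) ∧
       (∀ x ∈ nodes, (∃ y : V, Ee x y ∧ y ∈ nodes) → φ1 x))) := by
  intro Ee nodes
  refine ⟨fun hAU => ?_, fun ⟨hacyc, hint⟩ => allUntil_of_acyclic hacyc hint⟩
  have hnodes : ∀ x ∈ nodes, AllUntil E φ1 φ2 x := fun x hx => AllUntil.of_reflTransGen hAU hx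
  refine ⟨fun x hx hcyc => ?_, fun x hx ⟨_, hxy, _⟩ => (hnodes x hx).left_of_not_right hdf hxy.2⟩
  exact not_allUntil_of_transGen_self (TransGen.mono (fun _ _ h => h.1) _ _ hcyc) (hnodes x hx)
end

section
/- If the controller synthesis subroutine is correct (cs(S, φ) returns E' ⊆ E with (R, E', r_e, L) ⊨ φ whenever some such E' exists, and unsat otherwise) and the algorithm S_cs returns a configuration c, then S, c ⊨ R, i.e., for every access request q and every requirement (T ⇒ φ) ∈ R with q ⊢ T, the restricted structure S_{c,q} satisfies φ; moreover, if S_cs returns unsat then no configuration satisfies R. -/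
open scoped Classical

/-- Correctness of the algorithm `S_cs` (Theorem 1).  Resources `V`, access requests
`Q`, requirements indexed by `ι`: each requirement `i` has a target `T i : Q → Prop`
and an access constraint `φ i`, abstracted as a predicate on the edge set of the
structure (its satisfaction at the entry).  For `R' ⊆ R`, `Tgt R'` is the conjunction
of the targets in `R'` and the negated targets in `R \ R'`.  The configuration built
by `S_cs` grants `q` at edge `e` iff `e` belongs to the controller `ch R_q` synthesized
for the equivalence class `R_q = {i ∈ R | T i q}` of `q`.

(1) If the controller synthesis subroutine `ch` is correct — for every `R' ⊆ R` whose
equivalence class is nonempty it returns `ch R' ⊆ E` satisfying all constraints of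
`R'` — then the configuration built by `S_cs` satisfies all requirements.
(2) If for some `R' ⊆ R` with nonempty equivalence class no edge subset satisfies all
constraints of `R'` (controller synthesis returns unsat), then no configuration
satisfies all requirements. -/
theorem stmt16 {V Q ι : Type*} (Efull : Set (V × V)) (R : Finset ι)
    (T : ι → Q → Prop) (φ : ι → Set (V × V) → Prop) :
    let Tgt : Finset ι → Q → Prop :=
      fun R' q => (∀ i ∈ R', T i q) ∧ ∀ i ∈ R, i ∉ R' → ¬ T i q
    let sat : ((V × V) → Set Q) → Prop :=
      fun c => ∀ q : Q, ∀ i ∈ R, T i q → φ i {e | e ∈ Efull ∧ q ∈ c e}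
    (∀ ch : Finset ι → Set (V × V),
        (∀ R' ⊆ R, (∃ q : Q, Tgt R' q) → ch R' ⊆ Efull ∧ ∀ i ∈ R', φ i (ch R')) →
        sat (fun e => {q | e ∈ ch (R.filter fun i => T i q)})) ∧
    ((∃ R' ⊆ R, (∃ q : Q, Tgt R' q) ∧ ∀ E' ⊆ Efull, ∃ i ∈ R', ¬ φ i E') →
        ∀ c : (V × V) → Set Q, ¬ sat c) := by
  intro Tgt sat
  constructor
  · intro ch hch q i hi hTi
    have hTgt : Tgt (R.filter fun i => T i q) q := by
      constructor
      · intro j hj; exact (Finset.mem_filter.mp hj).2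
      · intro j hjR hjn hTj; exact hjn (Finset.mem_filter.mpr ⟨hjR, hTj⟩)
    obtain ⟨hsub, hφ⟩ := hch _ (Finset.filter_subset _ _) ⟨q, hTgt⟩
    have hset : {e | e ∈ Efull ∧ q ∈ {q' | e ∈ ch (R.filter fun i => T i q')}}
        = ch (R.filter fun i => T i q) := by
      ext e
      exact ⟨fun h => h.2, fun h => ⟨hsub h, h⟩⟩
    rw [hset]
    exact hφ i (Finset.mem_filter.mpr ⟨hi, hTi⟩)
  · rintro ⟨R', hR'sub, ⟨q, hTq, _⟩, hunsat⟩ c hsat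
    obtain ⟨i, hiR', hnφ⟩ := hunsat {e | e ∈ Efull ∧ q ∈ c e} (fun e he => he.1)
    exact hnφ (hsat q i (hR'sub hiR') (hTq i hiR'))
end

section
/- Soundness of the SMT encoding: for a resource structure S = (R, E, r, L), a singleton configuration template C = {c}, any resource r0, any access request q, and any access constraint φ, the restricted structure satisfies φ at r0 iff q satisfies the encoded SMT constraint: S_{c,q}, r0 ⊨ φ ⟺ q ⊢ τ(φ, r0). -/
/-- Syntax of CTL access constraints over atoms `P` (`atom p` stands for `a ∈ D`,
interpreted over the resource labeling). -/
inductive AC (P : Type*) : Type _ where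
  | tt : AC P
  | atom : P → AC P
  | not : AC P → AC P
  | and : AC P → AC P → AC P
  | ex : AC P → AC P
  | ax : AC P → AC P
  | eu : AC P → AC P → AC P
  | au : AC P → AC P → AC P

/-- CTL semantics of an access constraint at a node, over the structure with edge
relation `Ed` and atom interpretation `ι`. -/
def sem {P V : Type*} (Ed : V → V → Prop) (ι : P → V → Prop) : AC P → V → Prop
  | .tt, _ => True
  | .atom p, r => ι p r
  | .not φ, r => ¬ sem Ed ι φ r
  | .and φ ψ, r => sem Ed ι φ r ∧ sem Ed ι ψ r
  | .ex φ, r => ∃ r1 : V, Ed r r1 ∧ sem Ed ι φ r1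
  | .ax φ, r => ∀ r1 : V, Ed r r1 → sem Ed ι φ r1
  | .eu φ ψ, r => ∃ (n : ℕ) (p : ℕ → V), p 0 = r ∧ (∀ i < n, Ed (p i) (p (i + 1))) ∧
      sem Ed ι ψ (p n) ∧ ∀ i < n, sem Ed ι φ (p i)
  | .au φ ψ, r => ∀ p : ℕ → V, p 0 = r → (∀ i : ℕ, Ed (p i) (p (i + 1))) →
      ∃ n : ℕ, sem Ed ι ψ (p n) ∧ ∀ i < n, sem Ed ι φ (p i)

/-- The rewrite function `τ_U` for `E[φ1 U φ2]` (Figure 8): `g1`, `g2` are the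
encodings of the subformulas, `c` the edge policies, `X` the visited set.  (The
rewrite rules only ever invoke it with `r0 ∉ X`; the `r0 ∈ X` branch is vacuous.) -/
def tauEU {V Q : Type*} [Fintype V] [DecidableEq V] (E : V → V → Prop)
    (c : V → V → Q → Prop) (g1 g2 : V → Q → Prop) (r0 : V) (X : Finset V) (q : Q) :
    Prop :=
  if h : r0 ∈ X then False
  else
    g2 r0 q ∨ (g1 r0 q ∧
      ∃ r1 : V, (E r0 r1 ∧ r1 ∉ X) ∧ c r0 r1 q ∧ tauEU E c g1 g2 r1 (insert r0 X) q)
termination_by (Finset.univ \ X).card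
decreasing_by
  refine Finset.card_lt_card ⟨Finset.sdiff_subset_sdiff le_rfl (Finset.subset_insert _ _), ?_⟩
  intro hsub
  have hr0 := hsub (Finset.mem_sdiff.mpr ⟨Finset.mem_univ r0, h⟩)
  simp at hr0

/-- The rewrite function `τ_U` for `A[φ1 U φ2]` (Figure 8). -/
def tauAU {V Q : Type*} [Fintype V] [DecidableEq V] (E : V → V → Prop)
    (c : V → V → Q → Prop) (g1 g2 : V → Q → Prop) (r0 : V) (X : Finset V) (q : Q) :
    Prop :=
  if h : r0 ∈ X then False
  else
    g2 r0 q ∨ (g1 r0 q ∧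
      (∀ r1 : V, E r0 r1 → r1 ∉ X → c r0 r1 q → tauAU E c g1 g2 r1 (insert r0 X) q) ∧
      (∀ r1 : V, E r0 r1 → r1 ∈ X → ¬ c r0 r1 q))
termination_by (Finset.univ \ X).card
decreasing_by
  refine Finset.card_lt_card ⟨Finset.sdiff_subset_sdiff le_rfl (Finset.subset_insert _ _), ?_⟩
  intro hsub
  have hr0 := hsub (Finset.mem_sdiff.mpr ⟨Finset.mem_univ r0, h⟩)
  simp at hr0

/-- The rewrite function `τ(φ, r0)`, producing for each access request `q` the truth
value of the generated SMT constraint (`c a b q` means the local policy of the edge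
`(a, b)` grants `q`). -/
def tau {P V Q : Type*} [Fintype V] [DecidableEq V] (E : V → V → Prop)
    (c : V → V → Q → Prop) (ι : P → V → Prop) : AC P → V → Q → Prop
  | .tt, _, _ => True
  | .atom p, r, _ => ι p r
  | .not φ, r, q => ¬ tau E c ι φ r q
  | .and φ ψ, r, q => tau E c ι φ r q ∧ tau E c ι ψ r q
  | .ex φ, r, q => ∃ r1 : V, E r r1 ∧ c r r1 q ∧ tau E c ι φ r1 q
  | .ax φ, r, q => ∀ r1 : V, E r r1 → c r r1 q → tau E c ι φ r1 q
  | .eu φ ψ, r, q => tauEU E c (tau E c ι φ) (tau E c ι ψ) r ∅ q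
  | .au φ ψ, r, q => tauAU E c (tau E c ι φ) (tau E c ι ψ) r ∅ q

section Helpers

variable {V Q : Type*} [Fintype V] [DecidableEq V]

lemma card_insert_aux {X : Finset V} {r : V} (hr : r ∉ X) :
    (Finset.univ \ insert r X).card < (Finset.univ \ X).card := by
  refine Finset.card_lt_card ⟨Finset.sdiff_subset_sdiff le_rfl (Finset.subset_insert _ _), ?_⟩
  intro hsub
  have := hsub (Finset.mem_sdiff.mpr ⟨Finset.mem_univ r, hr⟩)
  simp at this

lemma eu_fwd (E : V → V → Prop) (c : V → V → Q → Prop) (g1 g2 : V → Q → Prop) (q : Q) :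
    ∀ (n : ℕ) (X : Finset V) (p : ℕ → V),
      (∀ i < n, E (p i) (p (i + 1)) ∧ c (p i) (p (i + 1)) q) →
      g2 (p n) q → (∀ i < n, g1 (p i) q) → (∀ i ≤ n, p i ∉ X) →
      tauEU E c g1 g2 (p 0) X q := by
  intro n
  induction n using Nat.strong_induction_on with
  | _ n IH =>
    intro X p hedge hg2 hg1 hX
    rw [tauEU, dif_neg (hX 0 (Nat.zero_le _))]
    by_cases h0 : g2 (p 0) q
    · exact Or.inl h0
    right
    have hpn : p 0 ≠ p n := fun h => h0 (h ▸ hg2)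
    have hn : 0 < n := by
      rcases Nat.eq_zero_or_pos n with h | h
      · exact absurd (by rw [h]) hpn
      · exact h
    -- largest index j ≤ n with p j = p 0
    set s : Finset ℕ := (Finset.range (n + 1)).filter (fun i => p i = p 0) with hs
    have hs0 : (0 : ℕ) ∈ s := by simp [hs]
    have hsne : s.Nonempty := ⟨0, hs0⟩
    set j := s.max' hsne with hj
    have hjmem : j ∈ s := s.max'_mem hsne
    have hjn : j ≤ n := by
      have := (Finset.mem_filter.mp hjmem).1
      simpa [Nat.lt_succ_iff] using this
    have hpj : p j = p 0 := (Finset.mem_filter.mp hjmem).2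
    have hjlt : j < n := lt_of_le_of_ne hjn (fun h => hpn (h ▸ hpj).symm)
    have hmax : ∀ i, j < i → i ≤ n → p i ≠ p 0 := by
      intro i hji hin hpi
      have : i ∈ s := by simp [hs, Nat.lt_succ_iff, hin, hpi]
      exact absurd (s.le_max' i this) (not_le.mpr hji)
    -- recurse on the tail starting at j+1
    set p' : ℕ → V := fun i => p (j + 1 + i) with hp'
    have htail := IH (n - (j + 1)) (by omega) (insert (p 0) X) p'
      (fun i hi => by
        have := hedge (j + 1 + i) (by omega)
        simpa [hp', Nat.add_assoc] using this)
      (by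
        have : j + 1 + (n - (j + 1)) = n := by omega
        simpa [hp', this] using hg2)
      (fun i hi => hg1 (j + 1 + i) (by omega))
      (fun i hi => by
        simp only [hp', Finset.mem_insert, not_or]
        exact ⟨hmax (j + 1 + i) (by omega) (by omega), hX (j + 1 + i) (by omega)⟩)
    refine ⟨hpj ▸ hg1 j hjlt, p (j + 1), ⟨?_, hX (j + 1) (by omega)⟩, ?_, ?_⟩
    · have := (hedge j hjlt).1; rwa [hpj] at this
    · have := (hedge j hjlt).2; rwa [hpj] at this
    · simpa [hp'] using htail

lemma eu_bwd (E : V → V → Prop) (c : V → V → Q → Prop) (g1 g2 : V → Q → Prop) (q : Q) :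
    ∀ (k : ℕ) (X : Finset V) (r : V), (Finset.univ \ X).card ≤ k →
      tauEU E c g1 g2 r X q →
      ∃ (n : ℕ) (p : ℕ → V), p 0 = r ∧
        (∀ i < n, E (p i) (p (i + 1)) ∧ c (p i) (p (i + 1)) q) ∧
        g2 (p n) q ∧ ∀ i < n, g1 (p i) q := by
  intro k
  induction k using Nat.strong_induction_on with
  | _ k IH =>
    intro X r hcard h
    rw [tauEU] at h
    by_cases hr : r ∈ X
    · rw [dif_pos hr] at h; exact absurd h (by simp)
    rw [dif_neg hr] at h
    rcases h with hg2 | ⟨hg1r, r1, ⟨hE, hr1X⟩, hc, htau⟩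
    · exact ⟨0, fun _ => r, rfl, by omega, hg2, by omega⟩
    · have hlt : (Finset.univ \ insert r X).card < k :=
        lt_of_lt_of_le (card_insert_aux hr) hcard
      obtain ⟨n, p, hp0, hedge, hg2, hg1⟩ := IH _ hlt (insert r X) r1 le_rfl htau
      refine ⟨n + 1, fun i => Nat.casesOn i r p, rfl, ?_, hg2, ?_⟩
      · intro i hi
        cases i with
        | zero => simpa [hp0] using ⟨hE, hc⟩
        | succ j => exact hedge j (by omega)
      · intro i hi
        cases i with
        | zero => exact hg1r
        | succ j => exact hg1 j (by omega)

lemma au_bwd (E : V → V → Prop) (c : V → V → Q → Prop) (g1 g2 : V → Q → Prop) (q : Q) :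
    ∀ (k : ℕ) (X : Finset V) (r : V), (Finset.univ \ X).card ≤ k →
      tauAU E c g1 g2 r X q →
      ∀ p : ℕ → V, p 0 = r → (∀ i : ℕ, E (p i) (p (i + 1)) ∧ c (p i) (p (i + 1)) q) →
      ∃ n : ℕ, g2 (p n) q ∧ ∀ i < n, g1 (p i) q := by
  intro k
  induction k using Nat.strong_induction_on with
  | _ k IH =>
    intro X r hcard h p hp0 hedge
    rw [tauAU] at h
    by_cases hr : r ∈ X
    · rw [dif_pos hr] at h; exact absurd h (by simp)
    rw [dif_neg hr] at h
    rcases h with hg2 | ⟨hg1r, hrec, hnoback⟩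
    · exact ⟨0, hp0 ▸ hg2, by omega⟩
    · have hE0 : E (p 0) (p 1) ∧ c (p 0) (p 1) q := hedge 0
      have hp1X : p 1 ∉ X := fun hmem =>
        hnoback (p 1) (hp0 ▸ hE0.1) hmem (hp0 ▸ hE0.2)
      have htau := hrec (p 1) (hp0 ▸ hE0.1) hp1X (hp0 ▸ hE0.2)
      have hlt : (Finset.univ \ insert r X).card < k :=
        lt_of_lt_of_le (card_insert_aux hr) hcard
      obtain ⟨n, hg2n, hg1n⟩ := IH _ hlt (insert r X) (p 1) le_rfl htau
        (fun i => p (i + 1)) rfl (fun i => hedge (i + 1))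
      refine ⟨n + 1, hg2n, ?_⟩
      intro i hi
      cases i with
      | zero => exact hp0 ▸ hg1r
      | succ j => exact hg1n j (by omega)

lemma au_fwd (E : V → V → Prop) (c : V → V → Q → Prop) (g1 g2 : V → Q → Prop) (q : Q)
    (hirr : ∀ x : V, ¬ E x x) (hdf : ∀ x : V, ∃ y : V, E x y ∧ c x y q) :
    ∀ (k : ℕ) (X : Finset V) (r : V), (Finset.univ \ X).card ≤ k → r ∉ X →
      (∀ x ∈ X, ¬ g2 x q ∧ ∃ (m : ℕ) (f : ℕ → V), f 0 = x ∧ f m = r ∧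
        (∀ i < m, E (f i) (f (i + 1)) ∧ c (f i) (f (i + 1)) q) ∧ (∀ i < m, f i ∈ X)) →
      (∀ p : ℕ → V, p 0 = r → (∀ i : ℕ, E (p i) (p (i + 1)) ∧ c (p i) (p (i + 1)) q) →
        ∃ n : ℕ, g2 (p n) q ∧ ∀ i < n, g1 (p i) q) →
      tauAU E c g1 g2 r X q := by
  classical
  set next : V → V := fun x => Classical.choose (hdf x) with hnextdef
  have hnext : ∀ x, E x (next x) ∧ c x (next x) q := fun x => Classical.choose_spec (hdf x)
  intro k
  induction k using Nat.strong_induction_on with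
  | _ k IH =>
    intro X r hcard hr hInv hsem
    rw [tauAU, dif_neg hr]
    by_cases hg2r : g2 r q
    · exact Or.inl hg2r
    right
    -- g1 holds at r, using the default infinite path
    have hg1r : g1 r q := by
      obtain ⟨n, hg2n, hg1n⟩ := hsem (fun i => next^[i] r) rfl
        (fun i => by simpa only [Function.iterate_succ_apply'] using hnext (next^[i] r))
      cases n with
      | zero => exact absurd hg2n hg2r
      | succ m => simpa using hg1n 0 (by omega)
    refine ⟨hg1r, ?_, ?_⟩
    · -- successors not in X
      intro r1 hE hr1X hc
      have hne : r1 ≠ r := fun h => hirr r (h ▸ hE)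
      have hlt : (Finset.univ \ insert r X).card < k :=
        lt_of_lt_of_le (card_insert_aux hr) hcard
      refine IH _ hlt (insert r X) r1 le_rfl (by simp [hne, hr1X]) ?_ ?_
      · -- invariant for insert r X
        intro x hx
        rcases Finset.mem_insert.mp hx with hxr | hxX
        · subst hxr
          refine ⟨hg2r, 1, fun i => if i = 0 then x else r1, by simp, by simp, ?_, ?_⟩
          · intro i hi
            interval_cases i
            simpa using ⟨hE, hc⟩
          · intro i hi
            interval_cases i
            simp
        · obtain ⟨hng2, m, f, hf0, hfm, hfe, hfX⟩ := hInv x hxX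
          refine ⟨hng2, m + 1, fun i => if i ≤ m then f i else r1, by simp [hf0],
            by simp, ?_, ?_⟩
          · intro i hi
            rcases Nat.lt_or_ge i m with him | him
            · have h1 : i ≤ m := le_of_lt him
              have h2 : i + 1 ≤ m := him
              simpa [h1, h2] using hfe i him
            · have hieq : i = m := by omega
              subst hieq
              simp only [le_refl, if_pos, if_neg (show ¬ (i + 1 ≤ i) by omega)]
              rw [hfm]
              exact ⟨hE, hc⟩
          · intro i hi
            rcases Nat.lt_or_ge i m with him | him
            · simp only [le_of_lt him, if_pos]
              exact Finset.mem_insert_of_mem (hfX i him)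
            · have hieq : i = m := by omega
              subst hieq
              simp [hfm]
        -- semantics at r1 : prepend r
      · intro p hp0 hedges
        obtain ⟨n, hg2n, hg1n⟩ := hsem (fun i => Nat.casesOn i r p) rfl
          (fun i => by
            cases i with
            | zero => simpa [hp0] using ⟨hE, hc⟩
            | succ j => exact hedges j)
        cases n with
        | zero => exact absurd hg2n hg2r
        | succ m =>
          exact ⟨m, hg2n, fun i hi => hg1n (i + 1) (by omega)⟩
    · -- no edge back into X
      intro r1 hE hr1X hc
      obtain ⟨hng2, m, f, hf0, hfm, hfe, hfX⟩ := hInv r1 hr1X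
      have hm : 0 < m := by
        rcases Nat.eq_zero_or_pos m with h | h
        · subst h; rw [hf0] at hfm; exact absurd (hfm ▸ hr1X) hr
        · exact h
      -- the cycle r → r1 → ... → r, repeated
      set cyc : ℕ → V := fun i => if i % (m + 1) = 0 then r else f (i % (m + 1) - 1)
        with hcyc
      have hcyc0 : cyc 0 = r := by simp [hcyc]
      have hmod : ∀ i : ℕ, (i + 1) % (m + 1) = (i % (m + 1) + 1) % (m + 1) := by
        intro i
        rw [Nat.add_mod, Nat.mod_eq_of_lt (show 1 < m + 1 by omega)]
      have hcycedge : ∀ i : ℕ, E (cyc i) (cyc (i + 1)) ∧ c (cyc i) (cyc (i + 1)) q := by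
        intro i
        have hlt : i % (m + 1) < m + 1 := Nat.mod_lt _ (by omega)
        rcases Nat.lt_or_ge (i % (m + 1)) m with hj | hj
        · have h1 : (i + 1) % (m + 1) = i % (m + 1) + 1 := by
            rw [hmod]; exact Nat.mod_eq_of_lt (by omega)
          rcases Nat.eq_zero_or_pos (i % (m + 1)) with h0 | h0
          · simp only [hcyc, h0, if_pos, h1, h0]
            have : ¬ (0 + 1 = 0) := by omega
            simp only [this, if_neg]
            simpa [hf0] using ⟨hE, hc⟩
          · have hne : ¬ (i % (m + 1) = 0) := by omega
            have hne2 : ¬ (i % (m + 1) + 1 = 0) := by omega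
            simp only [hcyc, h1, if_neg hne, if_neg hne2]
            have := hfe (i % (m + 1) - 1) (by omega)
            have harith : i % (m + 1) - 1 + 1 = i % (m + 1) + 1 - 1 := by omega
            rwa [harith] at this
        · have hjm : i % (m + 1) = m := by omega
          have h1 : (i + 1) % (m + 1) = 0 := by rw [hmod, hjm, Nat.mod_self]
          have hne : ¬ (i % (m + 1) = 0) := by omega
          simp only [hcyc, if_neg hne, h1, if_pos, hjm]
          have := hfe (m - 1) (by omega)
          have harith : m - 1 + 1 = m := by omega
          rw [harith, hfm] at this
          exact this
      obtain ⟨n, hg2n, _⟩ := hsem cyc hcyc0 hcycedge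
      rcases Nat.eq_zero_or_pos (n % (m + 1)) with h0 | h0
      · rw [hcyc] at hg2n; simp only [h0, if_pos] at hg2n
        exact hg2r hg2n
      · have hne : ¬ (n % (m + 1) = 0) := by omega
        rw [hcyc] at hg2n; simp only [hne, if_neg] at hg2n
        have hlt : n % (m + 1) - 1 < m := by
          have := Nat.mod_lt n (show 0 < m + 1 by omega)
          omega
        exact (hInv _ (hfX _ hlt)).1 hg2n

end Helpers

/-- Soundness of the SMT encoding (Theorem 4): for an irreflexive resource structure
whose restricted structures are deadlock-free, a singleton configuration template
`{c}`, any resource `r0`, access request `q`, and access constraint `φ`: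
`S_{c,q}, r0 ⊨ φ` iff `q ⊢ τ(φ, r0)`. -/
theorem stmt19 {P V Q : Type*} [Fintype V] [DecidableEq V] (E : V → V → Prop)
    (c : V → V → Q → Prop) (ι : P → V → Prop)
    (hirr : ∀ x : V, ¬ E x x)
    (hdf : ∀ (q : Q) (x : V), ∃ y : V, E x y ∧ c x y q)
    (φ : AC P) (r0 : V) (q : Q) :
    sem (fun a b => E a b ∧ c a b q) ι φ r0 ↔ tau E c ι φ r0 q := by
  induction φ generalizing r0 with
  | tt => simp [sem, tau]
  | atom p => simp [sem, tau]
  | not φ ih => simp [sem, tau, ih]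
  | and φ ψ ih1 ih2 => simp [sem, tau, ih1, ih2]
  | ex φ ih => simp [sem, tau, ih, and_assoc]
  | ax φ ih => simp [sem, tau, ih, and_imp]
  | eu φ ψ ih1 ih2 =>
    simp only [sem, tau, ih1, ih2]
    constructor
    · rintro ⟨n, p, hp0, hedge, h2, h1⟩
      have := eu_fwd E c (tau E c ι φ) (tau E c ι ψ) q n ∅ p hedge h2 h1 (by simp)
      rwa [hp0] at this
    · intro h
      exact eu_bwd E c (tau E c ι φ) (tau E c ι ψ) q _ ∅ r0 le_rfl h
  | au φ ψ ih1 ih2 =>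
    simp only [sem, tau, ih1, ih2]
    constructor
    · intro h
      exact au_fwd E c (tau E c ι φ) (tau E c ι ψ) q hirr (hdf q) _ ∅ r0 le_rfl
        (by simp) (by simp) h
    · intro h
      exact au_bwd E c (tau E c ι φ) (tau E c ι ψ) q _ ∅ r0 le_rfl h
end
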